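/- Fermat quartic line count bound: Bézout-style double counting on the 48-line configuration gives: if for each of the 48 lines l_i one has C·l_i ≥ ∑_{p ∈ l_i ∩ Sing} mult_p C, and the 48 lines group into 24 quadruples each summing to O_X(1) with each line in exactly 2 quadruples, and each double point lies on exactly 2 lines while each quadruple point lies on exactly 4 lines, then 24·deg(C) ≥ 4·∑_{p ∈ Sing} mult_p C, i.e., deg(C)/∑ mult_p C ≥ 1/6. -/
import Mathlib


/-- Abstract Bézout-style double counting on the 48-line configuration of the
Fermat quartic: each double point lies on exactly 2 lines, each quadruple point
on exactly 4 lines, `2·(C·l_i) ≥ 2·∑_{p ∈ l_i ∩ Sing} mult_p C` for each line,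
and the grouping of the 48 lines into 24 quadruples (each line in exactly two),
each quadruple summing to a hyperplane class, gives `∑_i 2·x_i = 24·deg C`.
Then `24·deg C ≥ 4·∑ mult`, hence `deg C / ∑ mult ≥ 1/6`. -/
theorem stmt_17 {α : Type*} [DecidableEq α]
    (L : Fin 48 → Finset α) (S2 S4 : Finset α) (hdisj : Disjoint S2 S4)
    (m : α → ℝ) (hm : ∀ p, 0 ≤ m p)
    (hr2 : ∀ p ∈ S2, (Finset.univ.filter (fun i => p ∈ L i)).card = 2)
    (hr4 : ∀ p ∈ S4, (Finset.univ.filter (fun i => p ∈ L i)).card = 4)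
    (x : Fin 48 → ℝ) (D : ℝ)
    (hx : ∀ i, x i ≥ ∑ p ∈ (S2 ∪ S4).filter (fun p => p ∈ L i), m p)
    (hsum : ∑ i, 2 * x i = 24 * D) :
    24 * D ≥ 4 * ∑ p ∈ S2 ∪ S4, m p ∧
      (0 < ∑ p ∈ S2 ∪ S4, m p → D / (∑ p ∈ S2 ∪ S4, m p) ≥ 1 / 6) := by
  have hswap : ∑ i, ∑ p ∈ (S2 ∪ S4).filter (fun p => p ∈ L i), m p
      = ∑ p ∈ S2 ∪ S4,
          ((Finset.univ.filter (fun i => p ∈ L i)).card : ℝ) * m p := by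
    simp only [Finset.sum_filter]
    rw [Finset.sum_comm]
    refine Finset.sum_congr rfl fun p _ => ?_
    rw [Finset.card_filter]
    push_cast
    rw [Finset.sum_mul]
    refine Finset.sum_congr rfl fun i _ => ?_
    by_cases h : p ∈ L i <;> simp [h]
  have hcard : ∀ p ∈ S2 ∪ S4,
      2 * m p ≤ ((Finset.univ.filter (fun i => p ∈ L i)).card : ℝ) * m p := by
    intro p hp
    rcases Finset.mem_union.mp hp with h | h
    · rw [hr2 p h]; norm_num
    · rw [hr4 p h]
      push_cast; linarith [hm p]
  have hkey : 24 * D ≥ 4 * ∑ p ∈ S2 ∪ S4, m p := by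
    have h1 : ∑ p ∈ S2 ∪ S4, 2 * m p
        ≤ ∑ p ∈ S2 ∪ S4, ((Finset.univ.filter (fun i => p ∈ L i)).card : ℝ) * m p :=
      Finset.sum_le_sum hcard
    have h2 : ∑ i, ∑ p ∈ (S2 ∪ S4).filter (fun p => p ∈ L i), m p ≤ ∑ i, x i :=
      Finset.sum_le_sum fun i _ => hx i
    have h3 : ∑ i, 2 * x i = 2 * ∑ i, x i := by rw [Finset.mul_sum]
    rw [← Finset.mul_sum] at h1
    linarith [hswap ▸ h2, h1]
  refine ⟨hkey, fun hpos => ?_⟩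
  rw [ge_iff_le, div_le_div_iff₀ (by norm_num) hpos]
  linarith
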